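/- Let Q and R be inverse quantal frames and X a Q-R-bimodule which is a frame, is a Q-sheaf with respect to its left Q-action, carries a right R-action preserving arbitrary joins in each variable that satisfies the right anchor condition xc = (1_X·c) ∧ x for all c ∈ R₀, commutes with the left action ((ax)r = a(xr)), and is open as a right R-locale, i.e., admits a monotone map ς' : X → R₀ with ς'(xc) = ς'(x) ∧ c and x·ς'(x) = x for all x ∈ X, c ∈ R₀. Assume moreover the invariance identities (which hold whenever X arises from a bi-action of étale groupoids): ς'(ax) = ς'(ς_Q(a*)x) for all a ∈ Q, x ∈ X, and ς_X(xr) = ς_X(x·ς_R(r)) for all r ∈ R, x ∈ X. Then for all r ∈ R and all x, y ∈ X one has ⟨xr*, y⟩ = ⟨x, yr⟩. -/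

import Mathlib

/-- A unital involutive quantale: a complete lattice with an associative
multiplication preserving arbitrary joins in each variable, a unit `e`, and a
join-preserving involution. -/
structure QuantaleStr (Q : Type*) [CompleteLattice Q] where
  mul : Q → Q → Q
  e : Q
  star : Q → Q
  mul_assoc : ∀ a b c, mul (mul a b) c = mul a (mul b c)
  sSup_mul : ∀ (S : Set Q) (b : Q), mul (sSup S) b = ⨆ a ∈ S, mul a b
  mul_sSup : ∀ (a : Q) (S : Set Q), mul a (sSup S) = ⨆ b ∈ S, mul a b
  e_mul : ∀ a, mul e a = a
  mul_e : ∀ a, mul a e = a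
  star_star : ∀ a, star (star a) = a
  star_mul : ∀ a b, star (mul a b) = mul (star b) (star a)
  star_sSup : ∀ S : Set Q, star (sSup S) = ⨆ a ∈ S, star a

/-- The set of partial units of a quantale. -/
def QuantaleStr.PU {Q : Type*} [CompleteLattice Q] (Qs : QuantaleStr Q) : Set Q :=
  {s | Qs.mul s (Qs.star s) ≤ Qs.e ∧ Qs.mul (Qs.star s) s ≤ Qs.e}

/-- An inverse quantal frame: a unital involutive quantale which is a frame,
has a stable support, and whose partial units join to the top. -/
structure InverseQuantalFrame (Q : Type*) [Order.Frame Q] extends toQuantale : QuantaleStr Q where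
  supp : Q → Q
  supp_le_e : ∀ a, supp a ≤ e
  supp_sSup : ∀ S : Set Q, supp (sSup S) = ⨆ a ∈ S, supp a
  supp_le_mul_star : ∀ a, supp a ≤ mul a (star a)
  le_supp_mul : ∀ a, a ≤ mul (supp a) a
  supp_stable : ∀ b a, b ≤ e → supp (mul b a) = mul b (supp a)
  sSup_PU : sSup {s | mul s (star s) ≤ e ∧ mul (star s) s ≤ e} = ⊤

/-- A left module over a quantale: a complete lattice with a unital associative
action preserving arbitrary joins in each variable. -/
structure QuantaleModule {Q : Type*} [CompleteLattice Q] (Qs : QuantaleStr Q)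
    (X : Type*) [CompleteLattice X] where
  act : Q → X → X
  act_mul : ∀ a b x, act (Qs.mul a b) x = act a (act b x)
  act_e : ∀ x, act Qs.e x = x
  sSup_act : ∀ (S : Set Q) (x : X), act (sSup S) x = ⨆ a ∈ S, act a x
  act_sSup : ∀ (a : Q) (S : Set X), act a (sSup S) = ⨆ x ∈ S, act a x

/-- A pre-Hilbert module over a quantale. -/
structure PreHilbertModule {Q : Type*} [CompleteLattice Q] (Qs : QuantaleStr Q)
    (X : Type*) [CompleteLattice X] extends QuantaleModule Qs X where
  inner : X → X → Q
  inner_act : ∀ a x y, inner (act a x) y = Qs.mul a (inner x y)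
  sSup_inner : ∀ (S : Set X) (y : X), inner (sSup S) y = ⨆ x ∈ S, inner x y
  inner_star : ∀ x y, inner x y = Qs.star (inner y x)

namespace PreHilbertModule

variable {Q X : Type*} [CompleteLattice Q] [CompleteLattice X] {Qs : QuantaleStr Q}

/-- A Hilbert section: `⟨x,s⟩s ≤ x` for all `x`. -/
def IsHilbertSection (H : PreHilbertModule Qs X) (s : X) : Prop :=
  ∀ x, H.act (H.inner x s) s ≤ x

/-- A regular element: `⟨s,s⟩s = s`. -/
def IsRegularSection (H : PreHilbertModule Qs X) (s : X) : Prop :=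
  H.act (H.inner s s) s = s

/-- A Hilbert basis: `x = ⋁_{t ∈ S} ⟨x,t⟩t` for all `x`. -/
def IsHilbertBasis (H : PreHilbertModule Qs X) (S : Set X) : Prop :=
  ∀ x, x = ⨆ t ∈ S, H.act (H.inner x t) t

/-- Non-degeneracy of the inner product. -/
def Nondegenerate (H : PreHilbertModule Qs X) : Prop :=
  ∀ x y, (∀ z, H.inner x z = H.inner y z) → x = y

end PreHilbertModule

/-- A `Q`-locale over an inverse quantal frame: a module which is a frame and
satisfies the anchor condition. -/
structure QLocale {Q : Type*} [Order.Frame Q] (Qf : InverseQuantalFrame Q)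
    (X : Type*) [Order.Frame X] extends QuantaleModule Qf.toQuantale X where
  anchor : ∀ b x, b ≤ Qf.e → act b x = act b ⊤ ⊓ x

/-- A `Q`-sheaf over an inverse quantal frame: a pre-Hilbert module which is a
frame, satisfies the anchor condition, and has a Hilbert basis. -/
structure QSheaf {Q : Type*} [Order.Frame Q] (Qf : InverseQuantalFrame Q)
    (X : Type*) [Order.Frame X] extends PreHilbertModule Qf.toQuantale X where
  anchor : ∀ b x, b ≤ Qf.e → act b x = act b ⊤ ⊓ x
  hasBasis : ∃ S : Set X, ∀ x, x = ⨆ t ∈ S, act (inner x t) t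

namespace QSheaf

variable {Q X : Type*} [Order.Frame Q] [Order.Frame X] {Qf : InverseQuantalFrame Q}

/-- The support `ς_X(x) = ⟨x,x⟩ ∧ e` of a `Q`-sheaf. -/
def sppX (H : QSheaf Qf X) (x : X) : Q := H.inner x x ⊓ Qf.e

/-- A local section: `ς_X(x)s = x` for all `x ≤ s`. -/
def IsLocalSection (H : QSheaf Qf X) (s : X) : Prop :=
  ∀ x ≤ s, H.act (H.sppX x) s = x

/-- A principal section: a local section with `⟨s,s⟩ ≤ e`. -/
def IsPrincipalSection (H : QSheaf Qf X) (s : X) : Prop :=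
  H.IsLocalSection s ∧ H.inner s s ≤ Qf.e

/-- A right local section: `x = s ∧ 1_Q·x` for all `x ≤ s`. -/
def IsRightLocalSection (H : QSheaf Qf X) (s : X) : Prop :=
  ∀ x ≤ s, x = s ⊓ H.act ⊤ x

/-- A local bisection: simultaneously a local section and a right local section. -/
def IsBisection (H : QSheaf Qf X) (s : X) : Prop :=
  H.IsLocalSection s ∧ H.IsRightLocalSection s

end QSheaf

/-!
Every `r ∈ R` is the join of the partial units below it, and both sides of the identity preserve
joins in `r`, so it suffices to treat a partial unit `s`; by the symmetry `⟨x, y⟩ = ⟨y, x⟩*` it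
then suffices to prove `⟨xs*, y⟩ ≤ ⟨x, ys⟩`, and expanding `y` in a Hilbert basis, to prove
`⟨w, u⟩ ≤ ⟨x, us⟩` for a basis element `u` and `w = xs*`.
With `b = ς(⟨u, w⟩)` one has `bu ≤ ⟨u, w⟩w = (⟨u, w⟩x)s*`, so openness of the right action
gives `bu ≤ u(ss*)`; hence `b ≤ ς_X(u(ss*))`, which is `ς_X(us)` by invariance since
`ς_R(s) = ss*`, and then
`⟨w, u⟩ ≤ ⟨w, u⟩b ≤ ⟨w, u⟩⟨us, us⟩ = ⟨⟨w, u⟩us, us⟩ ≤ ⟨x, us⟩` because `⟨w, u⟩us ≤ ws = xs*s ≤ x`.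
-/

theorem monotone_of_map_sSup {α β : Type*} [CompleteLattice α] [CompleteLattice β] {f : α → β}
    (hf : ∀ S : Set α, f (sSup S) = ⨆ a ∈ S, f a) : Monotone f := by
  intro a b hab
  have hb : f b = ⨆ x ∈ ({a, b} : Set α), f x := by rw [← hf, sSup_pair, sup_eq_right.mpr hab]
  rw [hb]
  exact le_iSup₂_of_le a (by simp) le_rfl

theorem map_iSup₂_of_map_sSup {α β γ : Type*} [CompleteLattice α] [CompleteLattice β]
    {f : α → β} (hf : ∀ S : Set α, f (sSup S) = ⨆ a ∈ S, f a) (T : Set γ) (g : γ → α) :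
    f (⨆ c ∈ T, g c) = ⨆ c ∈ T, f (g c) := by
  rw [← sSup_image, hf, iSup_image]

namespace QuantaleStr

variable {Q : Type*} [CompleteLattice Q] (Qs : QuantaleStr Q)

theorem mul_le_mul {a b c d : Q} (hab : a ≤ b) (hcd : c ≤ d) : Qs.mul a c ≤ Qs.mul b d :=
  (monotone_of_map_sSup (f := (Qs.mul · c)) (Qs.sSup_mul · c) hab).trans (monotone_of_map_sSup (Qs.mul_sSup b) hcd)

theorem star_le_star {a b : Q} (hab : a ≤ b) : Qs.star a ≤ Qs.star b :=
  monotone_of_map_sSup Qs.star_sSup hab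

theorem star_e : Qs.star Qs.e = Qs.e := by
  simpa only [Qs.star_star, Qs.e_mul, Qs.mul_e] using (Qs.star_mul Qs.e (Qs.star Qs.e)).symm

theorem star_mem_PU {s : Q} (hs : s ∈ Qs.PU) : Qs.star s ∈ Qs.PU := by
  simpa only [QuantaleStr.PU, Set.mem_ofPred_eq, Qs.star_star] using hs.symm

theorem mul_le_of_le_e (b : Q) {c : Q} (hc : c ≤ Qs.e) : Qs.mul b c ≤ b :=
  (Qs.mul_le_mul le_rfl hc).trans_eq (Qs.mul_e b)

end QuantaleStr

namespace InverseQuantalFrame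

variable {Q : Type*} [Order.Frame Q] (Qf : InverseQuantalFrame Q)

theorem supp_le_supp {a b : Q} (hab : a ≤ b) : Qf.supp a ≤ Qf.supp b :=
  monotone_of_map_sSup Qf.supp_sSup hab

theorem supp_e : Qf.supp Qf.e = Qf.e :=
  (Qf.supp_le_e _).antisymm (by simpa only [Qf.mul_e] using Qf.le_supp_mul Qf.e)

theorem supp_of_le_e {b : Q} (hb : b ≤ Qf.e) : Qf.supp b = b := by
  simpa only [Qf.mul_e, Qf.supp_e] using Qf.supp_stable b Qf.e hb

theorem le_star_of_le_e {b : Q} (hb : b ≤ Qf.e) : b ≤ Qf.star b :=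
  calc b = Qf.supp b := (Qf.supp_of_le_e hb).symm
    _ ≤ Qf.mul b (Qf.star b) := Qf.supp_le_mul_star b
    _ ≤ Qf.mul Qf.e (Qf.star b) := Qf.mul_le_mul hb le_rfl
    _ = Qf.star b := Qf.e_mul _

theorem star_of_le_e {b : Q} (hb : b ≤ Qf.e) : Qf.star b = b := by
  have hb' : Qf.star b ≤ Qf.e := (Qf.star_le_star hb).trans_eq Qf.star_e
  refine le_antisymm ?_ (Qf.le_star_of_le_e hb)
  simpa only [Qf.star_star] using Qf.le_star_of_le_e hb'

theorem le_mul_self_of_le_e {b : Q} (hb : b ≤ Qf.e) : b ≤ Qf.mul b b := by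
  simpa only [Qf.star_of_le_e hb, Qf.supp_of_le_e hb] using Qf.supp_le_mul_star b

theorem le_mul_supp_star (a : Q) : a ≤ Qf.mul a (Qf.supp (Qf.star a)) := by
  simpa only [Qf.star_mul, Qf.star_star, Qf.star_of_le_e (Qf.supp_le_e _)] using
    Qf.star_le_star (Qf.le_supp_mul (Qf.star a))

theorem supp_eq_mul_star {s : Q} (hs : Qf.mul s (Qf.star s) ≤ Qf.e) :
    Qf.supp s = Qf.mul s (Qf.star s) := by
  refine (Qf.supp_le_mul_star s).antisymm ?_
  calc Qf.mul s (Qf.star s)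
      ≤ Qf.mul (Qf.mul (Qf.supp s) s) (Qf.star s) := Qf.mul_le_mul (Qf.le_supp_mul s) le_rfl
    _ = Qf.mul (Qf.supp s) (Qf.mul s (Qf.star s)) := Qf.mul_assoc _ _ _
    _ ≤ Qf.supp s := Qf.mul_le_of_le_e _ hs

theorem star_eq_star_mul_mul_star {s : Q} (hs : Qf.mul s (Qf.star s) ≤ Qf.e) :
    Qf.star s = Qf.mul (Qf.star s) (Qf.mul s (Qf.star s)) := by
  refine le_antisymm ?_ (Qf.mul_le_of_le_e _ hs)
  simpa only [Qf.star_star, Qf.supp_eq_mul_star hs] using Qf.le_mul_supp_star (Qf.star s)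

theorem eq_sSup_PU_le (r : Q) : r = sSup {s | s ∈ Qf.PU ∧ s ≤ r} := by
  refine le_antisymm ?_ (sSup_le fun s hs => hs.2)
  calc r = r ⊓ sSup Qf.PU := by rw [QuantaleStr.PU, Qf.sSup_PU, inf_top_eq]
    _ = ⨆ s ∈ Qf.PU, r ⊓ s := inf_sSup_eq
    _ ≤ sSup {s | s ∈ Qf.PU ∧ s ≤ r} := by
      refine iSup₂_le fun s hs => le_sSup ⟨⟨?_, ?_⟩, inf_le_left⟩
      · exact (Qf.mul_le_mul inf_le_right (Qf.star_le_star inf_le_right)).trans hs.1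
      · exact (Qf.mul_le_mul (Qf.star_le_star inf_le_right) inf_le_right).trans hs.2

end InverseQuantalFrame

namespace QuantaleModule

variable {Q X : Type*} [CompleteLattice Q] [CompleteLattice X] {Qs : QuantaleStr Q}
  (M : QuantaleModule Qs X)

theorem act_le_act_left {a b : Q} (hab : a ≤ b) (x : X) : M.act a x ≤ M.act b x :=
  monotone_of_map_sSup (f := (M.act · x)) (M.sSup_act · x) hab

theorem act_le_act_right (a : Q) {x y : X} (hxy : x ≤ y) : M.act a x ≤ M.act a y :=
  monotone_of_map_sSup (M.act_sSup a) hxy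

end QuantaleModule

namespace PreHilbertModule

variable {Q X : Type*} [CompleteLattice Q] [CompleteLattice X] {Qs : QuantaleStr Q}
  (H : PreHilbertModule Qs X)

theorem inner_le_inner_left {x y : X} (hxy : x ≤ y) (z : X) : H.inner x z ≤ H.inner y z :=
  monotone_of_map_sSup (f := (H.inner · z)) (H.sSup_inner · z) hxy

theorem inner_le_inner_right (x : X) {y z : X} (hyz : y ≤ z) : H.inner x y ≤ H.inner x z := by
  rw [H.inner_star x y, H.inner_star x z]
  exact Qs.star_le_star (H.inner_le_inner_left hyz x)

theorem inner_act_right (x : X) (a : Q) (y : X) :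
    H.inner x (H.act a y) = Qs.mul (H.inner x y) (Qs.star a) := by
  rw [H.inner_star, H.inner_act, Qs.star_mul, ← H.inner_star]

theorem inner_sSup_right (x : X) (T : Set X) : H.inner x (sSup T) = ⨆ y ∈ T, H.inner x y := by
  rw [H.inner_star, H.sSup_inner, map_iSup₂_of_map_sSup Qs.star_sSup]
  simp only [← H.inner_star]

theorem act_inner_le_of_mem_basis {S : Set X} (hS : H.IsHilbertBasis S) {u : X} (hu : u ∈ S)
    (z : X) : H.act (H.inner z u) u ≤ z := by
  conv_rhs => rw [hS z]
  exact le_iSup₂_of_le u hu le_rfl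

end PreHilbertModule

namespace QSheaf

variable {Q X : Type*} [Order.Frame Q] [Order.Frame X] {Qf : InverseQuantalFrame Q}
  (H : QSheaf Qf X)

theorem act_le_of_le_e {b : Q} (hb : b ≤ Qf.e) (x : X) : H.act b x ≤ x :=
  (H.anchor b x hb).trans_le inf_le_right

theorem act_supp_inner_le {S : Set X} (hS : H.IsHilbertBasis S) {u : X} (hu : u ∈ S) (w : X) :
    H.act (Qf.supp (H.inner u w)) u ≤ H.act (H.inner u w) w :=
  calc H.act (Qf.supp (H.inner u w)) u
      ≤ H.act (Qf.mul (H.inner u w) (H.inner w u)) u := by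
        refine H.act_le_act_left ?_ u
        simpa only [← H.inner_star] using Qf.supp_le_mul_star (H.inner u w)
    _ = H.act (H.inner u w) (H.act (H.inner w u) u) := H.act_mul _ _ _
    _ ≤ H.act (H.inner u w) w := H.act_le_act_right _ (H.act_inner_le_of_mem_basis hS hu w)

theorem le_act_sppX (x : X) : x ≤ H.act (H.sppX x) x := by
  obtain ⟨S, hS⟩ := H.hasBasis
  conv_lhs => rw [hS x]
  refine iSup₂_le fun t ht => ?_
  have hsec := H.act_inner_le_of_mem_basis hS ht x
  have hsupp : Qf.supp (H.inner x t) ≤ H.sppX x := by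
    refine le_inf ?_ (Qf.supp_le_e _)
    calc Qf.supp (H.inner x t)
        ≤ Qf.mul (H.inner x t) (H.inner t x) := by
          simpa only [← H.inner_star] using Qf.supp_le_mul_star (H.inner x t)
      _ = H.inner (H.act (H.inner x t) t) x := (H.inner_act _ _ _).symm
      _ ≤ H.inner x x := H.inner_le_inner_left hsec x
  calc H.act (H.inner x t) t
      ≤ H.act (Qf.mul (H.sppX x) (H.inner x t)) t :=
        H.act_le_act_left ((Qf.le_supp_mul _).trans (Qf.mul_le_mul hsupp le_rfl)) t
    _ = H.act (H.sppX x) (H.act (H.inner x t) t) := H.act_mul _ _ _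
    _ ≤ H.act (H.sppX x) x := H.act_le_act_right _ hsec

theorem supp_inner_le_sppX (x y : X) : Qf.supp (H.inner x y) ≤ H.sppX x :=
  calc Qf.supp (H.inner x y)
      ≤ Qf.supp (Qf.mul (H.sppX x) (H.inner x y)) := by
        refine Qf.supp_le_supp ?_
        rw [← H.inner_act]
        exact H.inner_le_inner_left (H.le_act_sppX x) y
    _ = Qf.mul (H.sppX x) (Qf.supp (H.inner x y)) := Qf.supp_stable _ _ inf_le_right
    _ ≤ H.sppX x := Qf.mul_le_of_le_e _ (Qf.supp_le_e _)

theorem le_sppX_of_act_le {b : Q} {u z : X} (hb : b ≤ H.sppX u) (hbu : H.act b u ≤ z) :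
    b ≤ H.sppX z := by
  have hbe : b ≤ Qf.e := hb.trans inf_le_right
  refine le_inf ?_ hbe
  calc b ≤ Qf.mul b (Qf.mul b b) :=
        (Qf.le_mul_self_of_le_e hbe).trans (Qf.mul_le_mul le_rfl (Qf.le_mul_self_of_le_e hbe))
    _ ≤ Qf.mul b (Qf.mul (H.inner u u) b) :=
        Qf.mul_le_mul le_rfl (Qf.mul_le_mul (hb.trans inf_le_left) le_rfl)
    _ = H.inner (H.act b u) (H.act b u) := by
        rw [H.inner_act, H.inner_act_right, Qf.star_of_le_e hbe]
    _ ≤ H.inner z z := (H.inner_le_inner_left hbu _).trans (H.inner_le_inner_right z hbu)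

theorem le_inner_of_act_le {a : Q} {v x : X} (ha : Qf.supp (Qf.star a) ≤ H.inner v v)
    (hav : H.act a v ≤ x) : a ≤ H.inner x v :=
  calc a ≤ Qf.mul a (Qf.supp (Qf.star a)) := Qf.le_mul_supp_star a
    _ ≤ Qf.mul a (H.inner v v) := Qf.mul_le_mul le_rfl ha
    _ = H.inner (H.act a v) v := (H.inner_act _ _ _).symm
    _ ≤ H.inner x v := H.inner_le_inner_left hav v

end QSheaf

/-- `σ` is the map `ς'` exhibiting `X` as an open right `R`-locale. -/
structure OpenRightAction {R : Type*} [Order.Frame R] (Rf : InverseQuantalFrame R)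
    (X : Type*) [Order.Frame X] where
  act : X → R → X
  act_mul : ∀ x r r', act x (Rf.mul r r') = act (act x r) r'
  sSup_act : ∀ (S : Set X) (r : R), act (sSup S) r = ⨆ x ∈ S, act x r
  act_sSup : ∀ (x : X) (S : Set R), act x (sSup S) = ⨆ r ∈ S, act x r
  anchor : ∀ c x, c ≤ Rf.e → act x c = act ⊤ c ⊓ x
  σ : X → R
  σ_mono : Monotone σ
  σ_act : ∀ x c, c ≤ Rf.e → σ (act x c) = σ x ⊓ c
  act_σ : ∀ x, act x (σ x) = x

namespace OpenRightAction

variable {R X : Type*} [Order.Frame R] [Order.Frame X] {Rf : InverseQuantalFrame R}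
  (A : OpenRightAction Rf X)

theorem act_le_act_left {x y : X} (hxy : x ≤ y) (r : R) : A.act x r ≤ A.act y r :=
  monotone_of_map_sSup (f := (A.act · r)) (A.sSup_act · r) hxy

theorem act_le_act_right (x : X) {r r' : R} (hr : r ≤ r') : A.act x r ≤ A.act x r' :=
  monotone_of_map_sSup (A.act_sSup x) hr

theorem act_le_of_le_e (x : X) {c : R} (hc : c ≤ Rf.e) : A.act x c ≤ x :=
  (A.anchor c x hc).trans_le inf_le_right

theorem le_act_mul_star_of_le {s : R} (hs : Rf.mul s (Rf.star s) ≤ Rf.e) {z u v : X}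
    (hzv : z ≤ A.act v (Rf.star s)) (hzu : z ≤ u) : z ≤ A.act u (Rf.mul s (Rf.star s)) := by
  have hσ : A.σ z ≤ Rf.mul s (Rf.star s) :=
    calc A.σ z ≤ A.σ (A.act v (Rf.star s)) := A.σ_mono hzv
      _ = A.σ (A.act (A.act v (Rf.star s)) (Rf.mul s (Rf.star s))) := by
        rw [← A.act_mul, ← Rf.star_eq_star_mul_mul_star hs]
      _ ≤ Rf.mul s (Rf.star s) := (A.σ_act _ _ hs).trans_le inf_le_right
  calc z = A.act z (A.σ z) := (A.act_σ z).symm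
    _ ≤ A.act z (Rf.mul s (Rf.star s)) := A.act_le_act_right z hσ
    _ ≤ A.act u (Rf.mul s (Rf.star s)) := A.act_le_act_left hzu _

end OpenRightAction

section Bimodule

variable {Q R X : Type*} [Order.Frame Q] [Order.Frame R] [Order.Frame X]
  {Qf : InverseQuantalFrame Q} {Rf : InverseQuantalFrame R} (H : QSheaf Qf X)
  (A : OpenRightAction Rf X)

theorem inner_act_star_le_of_mem_basis
    (bimodule : ∀ a x r, A.act (H.act a x) r = H.act a (A.act x r))
    (inv2 : ∀ r x, H.sppX (A.act x r) = H.sppX (A.act x (Rf.supp r)))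
    {S : Set X} (hS : H.IsHilbertBasis S) {s : R} (hs : s ∈ Rf.PU) (x : X) {u : X}
    (hu : u ∈ S) : H.inner (A.act x (Rf.star s)) u ≤ H.inner x (A.act u s) := by
  set w := A.act x (Rf.star s)
  set b := Qf.supp (H.inner u w)
  have hbu : H.act b u ≤ A.act u (Rf.mul s (Rf.star s)) := by
    refine A.le_act_mul_star_of_le hs.1 (v := H.act (H.inner u w) x) ?_ (H.act_le_of_le_e (Qf.supp_le_e _) u)
    rw [bimodule]
    exact H.act_supp_inner_le hS hu w
  have hb : b ≤ H.sppX (A.act u s) := by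
    rw [inv2, Rf.supp_eq_mul_star hs.1]
    exact H.le_sppX_of_act_le (H.supp_inner_le_sppX u w) hbu
  refine H.le_inner_of_act_le ?_ ?_
  · rw [← H.inner_star]
    exact hb.trans inf_le_left
  · calc H.act (H.inner w u) (A.act u s) = A.act (H.act (H.inner w u) u) s := (bimodule _ _ _).symm
      _ ≤ A.act w s := A.act_le_act_left (H.act_inner_le_of_mem_basis hS hu w) s
      _ = A.act x (Rf.mul (Rf.star s) s) := (A.act_mul _ _ _).symm
      _ ≤ x := A.act_le_of_le_e x hs.2

theorem inner_act_star_le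
    (bimodule : ∀ a x r, A.act (H.act a x) r = H.act a (A.act x r))
    (inv2 : ∀ r x, H.sppX (A.act x r) = H.sppX (A.act x (Rf.supp r)))
    {s : R} (hs : s ∈ Rf.PU) (x y : X) :
    H.inner (A.act x (Rf.star s)) y ≤ H.inner x (A.act y s) := by
  obtain ⟨S, hS⟩ := H.hasBasis
  rw [hS y, map_iSup₂_of_map_sSup (H.inner_sSup_right _),
    map_iSup₂_of_map_sSup (f := (A.act · s)) (A.sSup_act · s),
    map_iSup₂_of_map_sSup (H.inner_sSup_right x)]
  refine iSup₂_mono fun u hu => ?_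
  rw [bimodule, H.inner_act_right, H.inner_act_right]
  exact Qf.mul_le_mul (inner_act_star_le_of_mem_basis H A bimodule inv2 hS hs x hu) le_rfl

theorem inner_act_star_eq_of_mem_PU
    (bimodule : ∀ a x r, A.act (H.act a x) r = H.act a (A.act x r))
    (inv2 : ∀ r x, H.sppX (A.act x r) = H.sppX (A.act x (Rf.supp r)))
    {s : R} (hs : s ∈ Rf.PU) (x y : X) :
    H.inner (A.act x (Rf.star s)) y = H.inner x (A.act y s) := by
  refine (inner_act_star_le H A bimodule inv2 hs x y).antisymm ?_
  have h := Qf.star_le_star (inner_act_star_le H A bimodule inv2 (Rf.star_mem_PU hs) y x)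
  rwa [Rf.star_star, ← H.inner_star, ← H.inner_star] at h

theorem inner_act_star_eq
    (bimodule : ∀ a x r, A.act (H.act a x) r = H.act a (A.act x r))
    (inv2 : ∀ r x, H.sppX (A.act x r) = H.sppX (A.act x (Rf.supp r)))
    (r : R) (x y : X) :
    H.inner (A.act x (Rf.star r)) y = H.inner x (A.act y r) := by
  rw [Rf.eq_sSup_PU_le r, Rf.star_sSup, A.act_sSup,
    map_iSup₂_of_map_sSup (H.inner_sSup_right x), map_iSup₂_of_map_sSup (A.act_sSup x),
    map_iSup₂_of_map_sSup (f := (H.inner · y)) (H.sSup_inner · y)]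
  exact iSup_congr fun s => iSup_congr fun hs => inner_act_star_eq_of_mem_PU H A bimodule inv2 hs.1 x y

end Bimodule

theorem stmt8_general {Q R X : Type*} [Order.Frame Q] [Order.Frame R] [Order.Frame X]
    (Qf : InverseQuantalFrame Q) (Rf : InverseQuantalFrame R)
    (H : QSheaf Qf X)
    -- right R-action:
    (ract : X → R → X)
    (ract_mul : ∀ x r r', ract x (Rf.mul r r') = ract (ract x r) r')
    (sSup_ract : ∀ (S : Set X) (r : R), ract (sSup S) r = ⨆ x ∈ S, ract x r)
    (ract_sSup : ∀ (x : X) (S : Set R), ract x (sSup S) = ⨆ r ∈ S, ract x r)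
    (right_anchor : ∀ c x, c ≤ Rf.e → ract x c = ract ⊤ c ⊓ x)
    (bimodule : ∀ a x r, ract (H.act a x) r = H.act a (ract x r))
    -- X is open as a right R-locale:
    (σ' : X → R)
    (σ'_mono : Monotone σ')
    (σ'_ract : ∀ x c, c ≤ Rf.e → σ' (ract x c) = σ' x ⊓ c)
    (ract_σ' : ∀ x, ract x (σ' x) = x)
    -- invariance identities:
    (inv2 : ∀ r x, H.sppX (ract x r) = H.sppX (ract x (Rf.supp r))) :
    ∀ (r : R) (x y : X),
      H.inner (ract x (Rf.star r)) y = H.inner x (ract y r) :=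
  inner_act_star_eq H
    ⟨ract, ract_mul, sSup_ract, ract_sSup, right_anchor, σ', σ'_mono, σ'_ract, ract_σ'⟩
    bimodule inv2

/-- For a `Q`-`R`-bimodule `X` which is a `Q`-sheaf, has a right
`R`-action with the right anchor condition, is open as a right `R`-locale, and
satisfies the invariance identities, one has `⟨xr*, y⟩ = ⟨x, yr⟩`. -/
theorem stmt8 {Q R X : Type*} [Order.Frame Q] [Order.Frame R] [Order.Frame X]
    (Qf : InverseQuantalFrame Q) (Rf : InverseQuantalFrame R)
    (H : QSheaf Qf X)
    -- right R-action:
    (ract : X → R → X)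
    (ract_mul : ∀ x r r', ract x (Rf.mul r r') = ract (ract x r) r')
    (ract_e : ∀ x, ract x Rf.e = x)
    (sSup_ract : ∀ (S : Set X) (r : R), ract (sSup S) r = ⨆ x ∈ S, ract x r)
    (ract_sSup : ∀ (x : X) (S : Set R), ract x (sSup S) = ⨆ r ∈ S, ract x r)
    (right_anchor : ∀ c x, c ≤ Rf.e → ract x c = ract ⊤ c ⊓ x)
    (bimodule : ∀ a x r, ract (H.act a x) r = H.act a (ract x r))
    -- X is open as a right R-locale:
    (σ' : X → R)
    (σ'_mono : Monotone σ')
    (σ'_le : ∀ x, σ' x ≤ Rf.e)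
    (σ'_ract : ∀ x c, c ≤ Rf.e → σ' (ract x c) = σ' x ⊓ c)
    (ract_σ' : ∀ x, ract x (σ' x) = x)
    -- invariance identities:
    (inv1 : ∀ a x, σ' (H.act a x) = σ' (H.act (Qf.supp (Qf.star a)) x))
    (inv2 : ∀ r x, H.sppX (ract x r) = H.sppX (ract x (Rf.supp r))) :
    ∀ (r : R) (x y : X),
      H.inner (ract x (Rf.star r)) y = H.inner x (ract y r) :=
  stmt8_general Qf Rf H ract ract_mul sSup_ract ract_sSup right_anchor bimodule σ' σ'_mono σ'_ract
    ract_σ' inv2
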